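/- arXiv:math/0506600 — 5 statements merged into one kernel-verified Lean document; each statement's English description precedes it below -/
import Mathlib

section
/- Insertion in L₁ satisfies the second associativity law: for all X, Y, Z ∈ L₁ and natural numbers n, m with 1 ≤ n ≤ |X| and n+|Y| ≤ m ≤ |X|+|Y|−1, one has (X◁ₙY)◁ₘZ = (X◁_{m−|Y|+1}Z)◁ₙY. -/
/-!
Induction on `X`. If both insertion places lie in the same subtree of `X = A ∧ B`, this is the
induction hypothesis; otherwise `Y` goes into `A` and `Z` into `B`, and the two insertions act on
different subtrees, so they commute.
-/

/-- Binary trees: the set `L₁` generated by `□` and `∧`. -/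
inductive L1 : Type
  | box : L1
  | wedge : L1 → L1 → L1
  deriving DecidableEq

namespace L1

/-- `|X|`: the number of occurrences of `□` in `X`. -/
def leaves : L1 → ℕ
  | box => 1
  | wedge X Y => X.leaves + Y.leaves

/-- Insertion `X ◁ₙ Z` in `L₁` (total extension of the partial operation;
on its domain `1 ≤ n ≤ |X|` it agrees with the defining clauses). -/
def ins : L1 → ℕ → L1 → L1
  | box, _, Z => Z
  | wedge X Y, n, Z =>
      if n ≤ X.leaves then wedge (X.ins n Z) Y else wedge X (Y.ins (n - X.leaves) Z)

end L1

namespace L1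

theorem leaves_pos : ∀ X : L1, 1 ≤ X.leaves
  | box => le_rfl
  | wedge A _ => le_add_right A.leaves_pos

theorem ins_wedge_of_le {A B Z : L1} {n : ℕ} (h : n ≤ A.leaves) :
    (wedge A B).ins n Z = wedge (A.ins n Z) B :=
  if_pos h

theorem ins_wedge_of_lt {A B Z : L1} {n : ℕ} (h : A.leaves < n) :
    (wedge A B).ins n Z = wedge A (B.ins (n - A.leaves) Z) :=
  if_neg h.not_ge

theorem leaves_ins (X Z : L1) (n : ℕ) : (X.ins n Z).leaves = X.leaves + Z.leaves - 1 := by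
  induction X generalizing n with
  | box => simp [ins, leaves]
  | wedge A B ihA ihB =>
    have := A.leaves_pos
    have := B.leaves_pos
    have := Z.leaves_pos
    rcases le_or_gt n A.leaves with h | h
    · rw [ins_wedge_of_le h, leaves, leaves, ihA]
      omega
    · rw [ins_wedge_of_lt h, leaves, leaves, ihB]
      omega

end L1

theorem insertion_assoc2 (X Y Z : L1) (n m : ℕ)
    (h1 : 1 ≤ n) (h2 : n ≤ X.leaves) (h3 : n + Y.leaves ≤ m)
    (h4 : m ≤ X.leaves + Y.leaves - 1) :
    (X.ins n Y).ins m Z = (X.ins (m - Y.leaves + 1) Z).ins n Y := by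
  have hY := Y.leaves_pos
  induction X generalizing n m with
  | box => simp only [L1.leaves] at h2 h4; omega
  | wedge A B ihA ihB =>
    simp only [L1.leaves] at h2 h4
    rcases le_or_gt n A.leaves with hnA | hAn
    · rcases le_or_gt m (A.leaves + Y.leaves - 1) with hmA | hAm
      · rw [L1.ins_wedge_of_le hnA, L1.ins_wedge_of_le (by rwa [L1.leaves_ins]),
          L1.ins_wedge_of_le (by omega), L1.ins_wedge_of_le (by rw [L1.leaves_ins]; omega),
          ihA n m h1 hnA h3 hmA]
      · rw [L1.ins_wedge_of_le hnA, L1.ins_wedge_of_lt (by rwa [L1.leaves_ins]),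
          L1.ins_wedge_of_lt (by omega), L1.ins_wedge_of_le hnA, L1.leaves_ins]
        congr 2
        omega
    · rw [L1.ins_wedge_of_lt hAn, L1.ins_wedge_of_lt (by omega), L1.ins_wedge_of_lt (by omega),
        L1.ins_wedge_of_lt hAn]
      have := ihB (n - A.leaves) (m - A.leaves) (by omega) (by omega) (by omega) (by omega)
      rw [show m - A.leaves - Y.leaves + 1 = m - Y.leaves + 1 - A.leaves by omega] at this
      rw [this]
end

section
/- (Completeness for I'') For all A, B ∈ L'', if v(A) = v(B) in L₁, then A = B is provable in the equational calculus I''. -/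
/-- Raw terms over the generator `2` and the insertion operations `◁ₙ`. -/
inductive T2 : Type
  | two : T2
  | ins : T2 → ℕ → T2 → T2
  deriving DecidableEq

namespace T2

/-- `|A|` for terms: `|2| = 2` and `|A ◁ₙ B| = |A| + |B| - 1`. -/
def size : T2 → ℕ
  | two => 2
  | ins A _ B => A.size + B.size - 1

/-- Membership in `L''`: each insertion `A ◁ₙ B` requires `1 ≤ n ≤ |A|`. -/
def WF : T2 → Prop
  | two => True
  | ins A n B => A.WF ∧ B.WF ∧ 1 ≤ n ∧ n ≤ A.size

/-- The interpretation `v : L'' → L₁`, with `v 2 = □∧□` and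
`v (A ◁ₙ B) = v A ◁ₙ v B`. -/
def val : T2 → L1
  | two => L1.wedge L1.box L1.box
  | ins A n B => A.val.ins n B.val

end T2

/-- The equational calculus `I''` on `L''`: the congruence (with respect to the
operations `◁ₙ`, on well-formed, i.e. defined, terms) generated by the axioms
(assoc 1) and (assoc 2). -/
inductive I2 : T2 → T2 → Prop
  | refl (A : T2) (h : A.WF) : I2 A A
  | symm {A B : T2} : I2 A B → I2 B A
  | trans {A B C : T2} : I2 A B → I2 B C → I2 A C
  | congr {A B C D : T2} {n : ℕ} : I2 A B → I2 C D →
      (T2.ins A n C).WF → (T2.ins B n D).WF →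
      I2 (T2.ins A n C) (T2.ins B n D)
  | assoc1 {A B C : T2} {n m : ℕ} :
      ((A.ins n B).ins m C).WF → n ≤ m → m < n + B.size →
      I2 ((A.ins n B).ins m C) (A.ins n (B.ins (m - n + 1) C))
  | assoc2 {A B C : T2} {n m : ℕ} :
      ((A.ins n B).ins m C).WF → n + B.size ≤ m →
      I2 ((A.ins n B).ins m C) ((A.ins (m - B.size + 1) C).ins n B)

/-! Completeness follows once every term `A` is shown `I''`-equal to a normal form `nf (v A)`
depending only on `v A`. Normal forms are built by grafting, `nf (X ∧ Y) = (2 ◁₂ nf Y) ◁₁ nf X`,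
where grafting `□` inserts nothing. By induction on `A` it suffices that `nf X ◁ₙ nf Z` is
`I''`-equal to `nf (X ◁ₙ Z)`. This is proved by induction on `X`: (assoc 1) carries the insertion
into the grafted copy of a subtree containing position `n`, and (assoc 2) moves it past a grafted
subtree lying to the left of position `n`. -/

theorem L1.leaves_pos_s4 (X : L1) : 1 ≤ X.leaves := by
  induction X with
  | box => rfl
  | wedge X Y ihX _ => simp only [L1.leaves]; omega

theorem L1.leaves_ins_s4 {X : L1} {n : ℕ} (Z : L1) (h : n ≤ X.leaves) :
    (X.ins n Z).leaves = X.leaves + Z.leaves - 1 := by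
  induction X generalizing n with
  | box => simp [L1.ins, L1.leaves]
  | wedge X Y ihX ihY =>
    have := X.leaves_pos_s4; have := Y.leaves_pos_s4; have := Z.leaves_pos_s4
    simp only [L1.ins, L1.leaves] at h ⊢
    split_ifs with hn
    · rw [L1.leaves, ihX hn]; omega
    · rw [L1.leaves, ihY (by omega)]; omega

theorem L1.wedge_ins_of_le {X : L1} (Y : L1) {n : ℕ} (Z : L1) (h : n ≤ X.leaves) :
    (L1.wedge X Y).ins n Z = L1.wedge (X.ins n Z) Y := if_pos h

theorem L1.wedge_ins_of_lt {X : L1} (Y : L1) {n : ℕ} (Z : L1) (h : X.leaves < n) :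
    (L1.wedge X Y).ins n Z = L1.wedge X (Y.ins (n - X.leaves) Z) := if_neg (by omega)

theorem L1.ins_ne_box {X : L1} (n : ℕ) (Z : L1) (hX : X ≠ L1.box) : X.ins n Z ≠ L1.box := by
  cases X with
  | box => exact absurd rfl hX
  | wedge X Y => simp only [L1.ins]; split_ifs <;> simp

namespace T2

theorem two_le_size (A : T2) : 2 ≤ A.size := by
  induction A with
  | two => rfl
  | ins A _ B ihA ihB => simp only [size]; omega

theorem val_eq_wedge (A : T2) : ∃ X Y, A.val = L1.wedge X Y := by
  induction A with
  | two => exact ⟨_, _, rfl⟩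
  | ins A n B ihA _ =>
    obtain ⟨X, Y, hA⟩ := ihA
    simp only [val, hA, L1.ins]
    split_ifs <;> exact ⟨_, _, rfl⟩

theorem leaves_val {A : T2} (hA : A.WF) : A.val.leaves = A.size := by
  induction A with
  | two => rfl
  | ins A n B ihA ihB =>
    obtain ⟨hA, hB, -, hn⟩ := hA
    simp only [val, size]
    rw [L1.leaves_ins_s4 _ (by rwa [ihA hA]), ihA hA, ihB hB]

/-- `A.graft k X = A ◁ₖ nf X`, where grafting `□` inserts nothing. -/
def graft : T2 → ℕ → L1 → T2
  | A, _, .box => A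
  | A, k, .wedge X Y => A.ins k ((two.graft 2 Y).graft 1 X)

/-- `nf □ = 2` is a junk value: `□` is the value of no term. -/
def nf : L1 → T2
  | .box => two
  | .wedge X Y => (two.graft 2 Y).graft 1 X

theorem graft_of_ne_box (A : T2) (k : ℕ) {X : L1} (hX : X ≠ L1.box) :
    A.graft k X = A.ins k (nf X) := by
  cases X with
  | box => exact absurd rfl hX
  | wedge => rfl

theorem size_graft (A : T2) (k : ℕ) (X : L1) :
    (A.graft k X).size = A.size + X.leaves - 1 := by
  induction X generalizing A k with
  | box => simp [graft, L1.leaves]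
  | wedge X Y ihX ihY =>
    have := X.leaves_pos_s4; have := Y.leaves_pos_s4
    simp only [graft, size, ihX, ihY, L1.leaves]
    omega

theorem wf_graft {A : T2} {k : ℕ} (X : L1) (hA : A.WF) (hk : 1 ≤ k) (hkA : k ≤ A.size) :
    (A.graft k X).WF := by
  induction X generalizing A k with
  | box => exact hA
  | wedge X Y ihX ihY =>
    have := Y.leaves_pos_s4
    have hYA : (two.graft 2 Y).WF := ihY (A := two) trivial one_le_two le_rfl
    exact ⟨hA, ihX hYA le_rfl (by rw [size_graft]; simp only [size]; omega), hk, hkA⟩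

theorem wf_nf (X : L1) : (nf X).WF := by
  cases X with
  | box => trivial
  | wedge X Y =>
    have := Y.leaves_pos_s4
    exact wf_graft X (wf_graft (A := two) Y trivial one_le_two le_rfl) le_rfl
      (by rw [size_graft]; simp only [size]; omega)

theorem size_nf {X : L1} (hX : X ≠ L1.box) : (nf X).size = X.leaves := by
  cases X with
  | box => exact absurd rfl hX
  | wedge X Y =>
    have := X.leaves_pos_s4; have := Y.leaves_pos_s4
    simp only [nf, size_graft, size, L1.leaves]
    omega

end T2

namespace I2

open T2

theorem wf {A B : T2} (h : I2 A B) : A.WF ∧ B.WF := by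
  induction h with
  | refl _ hA => exact ⟨hA, hA⟩
  | symm _ ih => exact ih.symm
  | trans _ _ ihA ihB => exact ⟨ihA.1, ihB.2⟩
  | congr _ _ hL hR => exact ⟨hL, hR⟩
  | assoc1 hL _ _ =>
    refine ⟨hL, ?_⟩
    obtain ⟨⟨hA, hB, hn, hnA⟩, hC, -, -⟩ := hL
    exact ⟨hA, ⟨hB, hC, by omega, by omega⟩, hn, hnA⟩
  | @assoc2 _ _ C _ _ hL _ =>
    refine ⟨hL, ?_⟩
    obtain ⟨⟨hA, hB, hn, hnA⟩, hC, -, hmAB⟩ := hL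
    have := C.two_le_size
    simp only [size] at hmAB
    exact ⟨⟨hA, hC, by omega, by omega⟩, hB, hn, by simp only [size]; omega⟩

theorem size_eq {A B : T2} (h : I2 A B) : A.size = B.size := by
  induction h with
  | refl => rfl
  | symm _ ih => exact ih.symm
  | trans _ _ ihA ihB => exact ihA.trans ihB
  | congr _ _ _ _ ihA ihC => simp only [size, ihA, ihC]
  | @assoc1 A B C | @assoc2 A B C =>
    have := B.two_le_size; have := C.two_le_size
    simp only [size]; omega

theorem ins {A A' B B' : T2} {n : ℕ} (hA : I2 A A') (hB : I2 B B') (hn : 1 ≤ n)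
    (hnA : n ≤ A.size) : I2 (A.ins n B) (A'.ins n B') :=
  congr hA hB ⟨hA.wf.1, hB.wf.1, hn, hnA⟩ ⟨hA.wf.2, hB.wf.2, hn, hA.size_eq ▸ hnA⟩

theorem graft {A A' : T2} {k : ℕ} (h : I2 A A') (hk : 1 ≤ k) (hkA : k ≤ A.size) (X : L1) :
    I2 (A.graft k X) (A'.graft k X) := by
  cases X with
  | box => exact h
  | wedge X Y => exact h.ins (refl _ (wf_nf (.wedge X Y))) hk hkA

theorem graft_assoc {A N : T2} {k n : ℕ} (hA : A.WF) (hN : N.WF) (hk : 1 ≤ k)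
    (hkA : k ≤ A.size) (hn : 1 ≤ n) (hnN : n ≤ N.size) (Z : L1) :
    I2 ((A.ins k N).graft (k + n - 1) Z) (A.ins k (N.graft n Z)) := by
  cases Z with
  | box => exact refl _ ⟨hA, hN, hk, hkA⟩
  | wedge Z₁ Z₂ =>
    have h := assoc1 (C := nf (.wedge Z₁ Z₂)) (m := k + n - 1)
      ⟨⟨hA, hN, hk, hkA⟩, wf_nf _, by omega, by simp only [size]; omega⟩ (by omega) (by omega)
    rwa [show k + n - 1 - k + 1 = n by omega] at h

theorem graft_comm {A : T2} {k m : ℕ} {X : L1} (hA : A.WF) (hk : 1 ≤ k)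
    (hkm : k + X.leaves ≤ m) (hmA : m ≤ A.size + X.leaves - 1) (Z : L1) :
    I2 ((A.graft k X).graft m Z) ((A.graft (m - X.leaves + 1) Z).graft k X) := by
  cases X with
  | box =>
    simp only [T2.graft, L1.leaves] at hkm hmA ⊢
    rw [Nat.sub_add_cancel (by omega)]
    exact refl _ (wf_graft Z hA (by omega) (by omega))
  | wedge X Y =>
    have hN := size_nf (X := .wedge X Y) (by simp)
    cases Z with
    | box => exact refl _ (wf_graft (.wedge X Y) hA hk (by omega))
    | wedge Z₁ Z₂ =>
      have h := assoc2 (A := A) (B := nf (.wedge X Y)) (C := nf (.wedge Z₁ Z₂)) (n := k) (m := m)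
        ⟨⟨hA, wf_nf _, hk, by omega⟩, wf_nf _, by omega, by simp only [size]; omega⟩ (by omega)
      rwa [hN] at h

end I2

namespace T2

def GraftIns (X : L1) : Prop :=
  ∀ ⦃A : T2⦄ ⦃k n : ℕ⦄ (Z : L1), A.WF → 1 ≤ k → k ≤ A.size → 1 ≤ n → n ≤ X.leaves →
    I2 ((A.graft k X).graft (k + n - 1) Z) (A.graft k (X.ins n Z))

theorem graftIns_box : GraftIns L1.box := by
  intro A k n Z hA hk hkA hn hn1
  obtain rfl : n = 1 := le_antisymm hn1 hn
  exact I2.refl _ (wf_graft Z hA hk hkA)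

theorem nf_wedge_ins {X₁ X₂ : L1} (h₁ : GraftIns X₁) (h₂ : GraftIns X₂) (Z : L1) {n : ℕ}
    (hn : 1 ≤ n) (hnX : n ≤ (L1.wedge X₁ X₂).leaves) :
    I2 ((nf (.wedge X₁ X₂)).graft n Z) (nf ((L1.wedge X₁ X₂).ins n Z)) := by
  have hB : (two.graft 2 X₂).WF := wf_graft X₂ trivial one_le_two le_rfl
  have hBs : (two.graft 2 X₂).size = X₂.leaves + 1 := by
    rw [size_graft]; simp only [size]; omega
  rcases le_or_gt n X₁.leaves with hn₁ | hn₁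
  · rw [L1.wedge_ins_of_le _ _ hn₁]
    have h := h₁ Z hB le_rfl (by omega) hn hn₁
    rwa [Nat.add_sub_cancel_left] at h
  · rw [L1.wedge_ins_of_lt _ _ hn₁]
    simp only [L1.leaves] at hnX
    have h := h₂ Z (A := two) (k := 2) (n := n - X₁.leaves) trivial one_le_two le_rfl
      (by omega) (by omega)
    rw [show 2 + (n - X₁.leaves) - 1 = n - X₁.leaves + 1 by omega] at h
    exact (I2.graft_comm hB le_rfl (by omega) (by omega) Z).trans
      (h.graft le_rfl (by rw [size_graft]; omega) X₁)

theorem graftIns_wedge {X₁ X₂ : L1} (h₁ : GraftIns X₁) (h₂ : GraftIns X₂) :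
    GraftIns (.wedge X₁ X₂) := by
  intro A k n Z hA hk hkA hn hnX
  rw [graft_of_ne_box A k (L1.ins_ne_box n Z (by simp))]
  exact (I2.graft_assoc hA (wf_nf _) hk hkA hn (by rwa [size_nf (by simp)]) Z).trans
    ((I2.refl A hA).ins (nf_wedge_ins h₁ h₂ Z hn hnX) hk hkA)

theorem graftIns (X : L1) : GraftIns X := by
  induction X with
  | box => exact graftIns_box
  | wedge X₁ X₂ h₁ h₂ => exact graftIns_wedge h₁ h₂

theorem _root_.I2.nf_val {A : T2} (hA : A.WF) : I2 A (nf A.val) := by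
  induction A with
  | two => exact I2.refl two trivial
  | ins A n B ihA ihB =>
    obtain ⟨hA, hB, hn, hnA⟩ := hA
    obtain ⟨X₁, X₂, hX⟩ := A.val_eq_wedge
    obtain ⟨Z₁, Z₂, hZ⟩ := B.val_eq_wedge
    have hins := (ihA hA).ins (ihB hB) hn hnA
    have hnX : n ≤ (L1.wedge X₁ X₂).leaves := by rwa [← hX, leaves_val hA]
    rw [hX, hZ] at hins
    simp only [val, hX, hZ]
    exact hins.trans (nf_wedge_ins (graftIns X₁) (graftIns X₂) (.wedge Z₁ Z₂) hn hnX)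

end T2

theorem completeness_I2 {A B : T2} (hA : A.WF) (hB : B.WF)
    (h : A.val = B.val) : I2 A B :=
  (I2.nf_val hA).trans (h ▸ I2.nf_val hB).symm
end

section
/- (Auxiliary Lemma) If A and B are normal members of L'' and v(A) = v(B), then A and B coincide (are identical terms). -/
/-- A term of `L''` is *normal* when it has no subterm of the form
`(X ◁ₙ Y) ◁ₘ Z` with `n ≤ m`. -/
def T2.Normal : T2 → Prop
  | T2.two => True
  | T2.ins A m B => A.Normal ∧ B.Normal ∧ ∀ (X : T2) (n : ℕ) (Y : T2), A = T2.ins X n Y → m < n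


/-!
Normality bounds the root index of a term by 2 and forces its left argument to be `2` or
`2 ◁₂ C`, so a normal term is `2`, `2 ◁₁ B`, `2 ◁₂ C` or `(2 ◁₂ C) ◁₁ B`, with values
`□∧□`, `v B∧□`, `□∧v C`, `v B∧v C`. As no `v A` is `□`, the shape and the subterms can be read
back from `v A`: `v` has a left inverse on normal terms.
-/

namespace T2

theorem val_ne_box : ∀ A : T2, A.val ≠ L1.box
  | two => L1.noConfusion
  | ins A n B => by
    obtain ⟨L, R, hA⟩ : ∃ L R, A.val = L1.wedge L R := by
      cases h : A.val with
      | box => exact absurd h (val_ne_box A)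
      | wedge L R => exact ⟨L, R, rfl⟩
    simp only [val, hA, L1.ins]
    split <;> exact L1.noConfusion

theorem val_ins_two_one (B : T2) : (ins two 1 B).val = L1.wedge B.val L1.box := rfl

theorem val_ins_two_two (C : T2) : (ins two 2 C).val = L1.wedge L1.box C.val := rfl

theorem val_ins_ins_two_two_one (B C : T2) :
    (ins (ins two 2 C) 1 B).val = L1.wedge B.val C.val := rfl

theorem index_le_two {X : T2} {m : ℕ} {Y : T2} (hW : (ins X m Y).WF) (hN : (ins X m Y).Normal) :
    m ≤ 2 := by
  induction X generalizing m Y with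
  | two => exact hW.2.2.2
  | ins _ _ _ ih _ => exact ((hN.2.2 _ _ _ rfl).trans_le (ih hW.1 hN.1)).le

theorem ins_cases_of_normal {X : T2} {m : ℕ} {Y : T2} (hW : (ins X m Y).WF)
    (hN : (ins X m Y).Normal) :
    X = two ∧ (m = 1 ∨ m = 2) ∨ ∃ C, X = ins two 2 C ∧ m = 1 := by
  obtain ⟨hXW, -, hm, hmX⟩ := hW
  cases X with
  | two => exact Or.inl ⟨rfl, by simp only [size] at hmX; omega⟩
  | ins X' n C =>
    have hmn := hN.2.2 _ _ _ rfl
    have hn := index_le_two hXW hN.1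
    obtain rfl : n = 2 := by omega
    cases X' with
    | two => exact Or.inr ⟨C, rfl, by omega⟩
    | ins _ _ _ => exact absurd (hN.1.2.2 _ _ _ rfl) (index_le_two hXW.1 hN.1.1).not_gt

end T2

namespace L1

def toNormalTerm : L1 → T2
  | box => T2.two
  | wedge box box => T2.two
  | wedge L box => T2.ins T2.two 1 L.toNormalTerm
  | wedge box R => T2.ins T2.two 2 R.toNormalTerm
  | wedge L R => T2.ins (T2.ins T2.two 2 R.toNormalTerm) 1 L.toNormalTerm

theorem toNormalTerm_wedge_box {L : L1} (hL : L ≠ box) :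
    (wedge L box).toNormalTerm = T2.ins T2.two 1 L.toNormalTerm := by
  cases L <;> first | contradiction | rfl

theorem toNormalTerm_box_wedge {R : L1} (hR : R ≠ box) :
    (wedge box R).toNormalTerm = T2.ins T2.two 2 R.toNormalTerm := by
  cases R <;> first | contradiction | rfl

theorem toNormalTerm_wedge {L R : L1} (hL : L ≠ box) (hR : R ≠ box) :
    (wedge L R).toNormalTerm = T2.ins (T2.ins T2.two 2 R.toNormalTerm) 1 L.toNormalTerm := by
  cases L <;> cases R <;> first | contradiction | rfl

end L1

namespace T2

theorem toNormalTerm_val {A : T2} (hW : A.WF) (hN : A.Normal) : A.val.toNormalTerm = A := by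
  induction A with
  | two => rfl
  | ins X m Y ihX ihY =>
    have hY := ihY hW.2.1 hN.2.1
    rcases ins_cases_of_normal hW hN with ⟨rfl, rfl | rfl⟩ | ⟨C, rfl, rfl⟩
    · rw [val_ins_two_one, L1.toNormalTerm_wedge_box (val_ne_box Y), hY]
    · rw [val_ins_two_two, L1.toNormalTerm_box_wedge (val_ne_box Y), hY]
    · have hC : C.val.toNormalTerm = C := by
        have hX := ihX hW.1 hN.1
        rw [val_ins_two_two, L1.toNormalTerm_box_wedge (val_ne_box C)] at hX
        exact (ins.inj hX).2.2
      rw [val_ins_ins_two_two_one, L1.toNormalTerm_wedge (val_ne_box Y) (val_ne_box C), hC, hY]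

end T2

theorem auxiliary_lemma {A B : T2} (hA : A.WF) (hB : B.WF)
    (hAn : A.Normal) (hBn : B.Normal) (h : A.val = B.val) : A = B := by
  rw [← T2.toNormalTerm_val hA hAn, h, T2.toNormalTerm_val hB hBn]
end

section
/- (Normal type classification) Every normal member of L'' is of exactly one of the following four forms: (2◁₂A₂)◁₁A₁, or 2◁₂A₂, or 2◁₁A₁, or 2, where A₁ and A₂ are themselves normal members of L''. -/
/-! Induct on the left factor `B` of a normal `B ◁ₙ C`: it is itself of one of the four forms.
Normality forces `n` below the index of `B`, which excludes the forms ending in `◁₁` and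
leaves `n = 1` after `2 ◁₂ A₂`; after `2` the size bound `n ≤ |2| = 2` leaves `n = 1` or `n = 2`. -/

namespace T2

theorem Normal.index_lt {X Y Z : T2} {k m : ℕ} (h : ((X.ins k Y).ins m Z).Normal) : m < k :=
  h.2.2 X k Y rfl

theorem WF.one_le_index {B C : T2} {n : ℕ} (h : (B.ins n C).WF) : 1 ≤ n :=
  h.2.2.1

theorem WF.index_mem_of_two {C : T2} {n : ℕ} (h : (two.ins n C).WF) : n = 1 ∨ n = 2 := by
  have : n ≤ 2 := h.2.2.2
  have := h.one_le_index
  omega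

end T2

theorem normal_classification (A : T2) (hWF : A.WF) (hN : A.Normal) :
    (∃ A₁ A₂ : T2, A₁.WF ∧ A₁.Normal ∧ A₂.WF ∧ A₂.Normal ∧
        A = (T2.two.ins 2 A₂).ins 1 A₁) ∨
    (∃ A₂ : T2, A₂.WF ∧ A₂.Normal ∧ A = T2.two.ins 2 A₂) ∨
    (∃ A₁ : T2, A₁.WF ∧ A₁.Normal ∧ A = T2.two.ins 1 A₁) ∨
    A = T2.two := by
  induction A with
  | two => exact Or.inr (Or.inr (Or.inr rfl))
  | ins B n C ihB _ =>
    have hCW : C.WF := hWF.2.1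
    have hCN : C.Normal := hN.2.1
    rcases ihB hWF.1 hN.1 with ⟨_, _, -, -, -, -, rfl⟩ | ⟨A₂, hW₂, hN₂, rfl⟩ | ⟨_, -, -, rfl⟩ | rfl
    · exact absurd hN.index_lt (not_lt.2 hWF.one_le_index)
    · obtain rfl : n = 1 := by have := hN.index_lt; have := hWF.one_le_index; omega
      exact Or.inl ⟨C, A₂, hCW, hCN, hW₂, hN₂, rfl⟩
    · exact absurd hN.index_lt (not_lt.2 hWF.one_le_index)
    · rcases hWF.index_mem_of_two with rfl | rfl
      · exact Or.inr (Or.inr (Or.inl ⟨C, hCW, hCN, rfl⟩))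
      · exact Or.inr (Or.inl ⟨C, hCW, hCN, rfl⟩)
end

section
/- (Decomposition of the pentagon) In the category Γ, with 2 = □∧□, the following equation holds: (γ→_{2,2}◁₁1_2) ∘ (γ→_{2,2}◁₃1_2) = (1_2◁₁γ→_{2,2}) ∘ (γ→_{2,2}◁₂1_2) ∘ (1_2◁₂γ→_{2,2}). -/
/-- `2 = □∧□`. -/
def L1.two : L1 := L1.wedge L1.box L1.box

/-- Arrow terms of the category `Γ`: generated by identities `1_A`,
`γ→_{A,B}`, `γ←_{A,B}`, composition and the operations `◁ₙ`. -/
inductive G : Type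
  | id : L1 → G
  | gam : L1 → L1 → G
  | gaminv : L1 → L1 → G
  | comp : G → G → G
  | ins : G → ℕ → G → G

namespace G

/-- The source of an arrow term (`comp g f` stands for `g ∘ f`). -/
def src : G → L1
  | id A => A
  | gam A B => A.ins A.leaves B
  | gaminv A B => B.ins 1 A
  | comp _ f => f.src
  | ins f n g => (f.src).ins n (g.src)

/-- The target of an arrow term. -/
def tgt : G → L1
  | id A => A
  | gam A B => B.ins 1 A
  | gaminv A B => A.ins A.leaves B
  | comp g _ => g.tgt
  | ins f n g => (f.tgt).ins n (g.tgt)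

/-- Well-formedness of arrow terms: `g ∘ f` requires `tgt f = src g`, and
`f ◁ₙ g` for `f : A → B` requires `1 ≤ n`, `n ≤ |A|` and `n ≤ |B|`. -/
def WF : G → Prop
  | id _ => True
  | gam _ _ => True
  | gaminv _ _ => True
  | comp g f => g.WF ∧ f.WF ∧ f.tgt = g.src
  | ins f n g => f.WF ∧ g.WF ∧ 1 ≤ n ∧ n ≤ f.src.leaves ∧ n ≤ f.tgt.leaves

end G

/-- The congruence on arrow terms of `Γ` generated by the equations
(cat 1), (cat 2), (bif 1), (bif 2), (assoc 1→), (assoc 2→), (unit→),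
(γ nat), (γγ), (γ1), (hex 1), (hex 1a), (hex 2), (hex 2a). -/
inductive GEq : G → G → Prop
  | refl (f : G) (h : f.WF) : GEq f f
  | symm {f g : G} : GEq f g → GEq g f
  | trans {f g h : G} : GEq f g → GEq g h → GEq f h
  | compCongr {f₁ f₂ g₁ g₂ : G} : GEq f₁ g₁ → GEq f₂ g₂ →
      (G.comp f₁ f₂).WF → (G.comp g₁ g₂).WF →
      GEq (G.comp f₁ f₂) (G.comp g₁ g₂)
  | insCongr {f g h j : G} {n : ℕ} : GEq f g → GEq h j →
      (G.ins f n h).WF → (G.ins g n j).WF →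
      GEq (G.ins f n h) (G.ins g n j)
  | cat1l (f : G) (h : f.WF) : GEq (G.comp (G.id f.tgt) f) f
  | cat1r (f : G) (h : f.WF) : GEq (G.comp f (G.id f.src)) f
  | cat2 (f g h : G) (hw : (G.comp h (G.comp g f)).WF) :
      GEq (G.comp (G.comp h g) f) (G.comp h (G.comp g f))
  | bif1 (A B : L1) (n : ℕ) (h1 : 1 ≤ n) (h2 : n ≤ A.leaves) :
      GEq (G.ins (G.id A) n (G.id B)) (G.id (A.ins n B))
  | bif2 (f₁ f₂ g₁ g₂ : G) (n : ℕ)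
      (hw : (G.ins (G.comp f₂ f₁) n (G.comp g₂ g₁)).WF) :
      GEq (G.ins (G.comp f₂ f₁) n (G.comp g₂ g₁))
          (G.comp (G.ins f₂ n g₂) (G.ins f₁ n g₁))
  | assoc1 (f g h : G) (n m : ℕ)
      (hw : (G.ins (G.ins f n g) m h).WF) (h3 : n ≤ m) (h4 : m < n + g.src.leaves) :
      GEq (G.ins (G.ins f n g) m h) (G.ins f n (G.ins g (m - n + 1) h))
  | assoc2 (f g h : G) (n m : ℕ)
      (hw : (G.ins (G.ins f n g) m h).WF) (h3 : n + g.src.leaves ≤ m) :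
      GEq (G.ins (G.ins f n g) m h) (G.ins (G.ins f (m - g.src.leaves + 1) h) n g)
  | unitl (f : G) (h : f.WF) : GEq (G.ins (G.id L1.box) 1 f) f
  | unitr (f : G) (n : ℕ) (h : f.WF) (h1 : 1 ≤ n)
      (h2 : n ≤ f.src.leaves) (h3 : n ≤ f.tgt.leaves) :
      GEq (G.ins f n (G.id L1.box)) f
  | gnat (f g : G) (hf : f.WF) (hg : g.WF) :
      GEq (G.comp (G.gam f.tgt g.tgt) (G.ins f f.src.leaves g))
          (G.comp (G.ins g 1 f) (G.gam f.src g.src))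
  | gg1 (A B : L1) : GEq (G.comp (G.gaminv A B) (G.gam A B)) (G.id (A.ins A.leaves B))
  | gg2 (A B : L1) : GEq (G.comp (G.gam A B) (G.gaminv A B)) (G.id (B.ins 1 A))
  | gam1l (A : L1) : GEq (G.gam L1.box A) (G.id A)
  | gam1r (A : L1) : GEq (G.gam A L1.box) (G.id A)
  | hex1 (A B C : L1) :
      GEq (G.gam (A.ins A.leaves B) C)
          (G.comp (G.ins (G.gam A C) A.leaves (G.id B))
                  (G.ins (G.id A) A.leaves (G.gam B C)))
  | hex1a (A B C : L1) (n : ℕ) (h1 : 1 ≤ n) (h2 : n < A.leaves) :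
      GEq (G.gam (A.ins n B) C) (G.ins (G.gam A C) n (G.id B))
  | hex2 (A B C : L1) :
      GEq (G.gam C (A.ins 1 B))
          (G.comp (G.ins (G.id A) 1 (G.gam C B))
                  (G.ins (G.gam C A) C.leaves (G.id B)))
  | hex2a (A B C : L1) (n : ℕ) (h1 : 1 < n) (h2 : n ≤ A.leaves) :
      GEq (G.gam C (A.ins n B)) (G.ins (G.gam C A) (n + C.leaves - 1) (G.id B))

namespace G

/-- The defined associativity arrow
`b→_{A,B,C} = ((γ→_{2,2} ◁₃ 1_C) ◁₂ 1_B) ◁₁ 1_A : A∧(B∧C) → (A∧B)∧C`. -/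
def bto (A B C : L1) : G :=
  G.ins (G.ins (G.ins (G.gam L1.two L1.two) 3 (G.id C)) 2 (G.id B)) 1 (G.id A)

/-- The defined arrow
`b←_{A,B,C} = ((γ←_{2,2} ◁₃ 1_C) ◁₂ 1_B) ◁₁ 1_A : (A∧B)∧C → A∧(B∧C)`. -/
def bfrom (A B C : L1) : G :=
  G.ins (G.ins (G.ins (G.gaminv L1.two L1.two) 3 (G.id C)) 2 (G.id B)) 1 (G.id A)

/-- The defined operation on arrows `f ∧ g = (1_2 ◁₂ g) ◁₁ f`. -/
def wdg (f g : G) : G := G.ins (G.ins (G.id L1.two) 2 g) 1 f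

end G

/-!
By (hex 1a), `γ→_{2,2} ◁₁ 1_2` is `γ→_{2◁₁2, 2}`. Since `γ→_{2,2} : 2◁₂2 → 2◁₁2` and
`|2◁₂2| = 3`, the factor `γ→_{2,2} ◁₃ 1_2` is `γ→_{2,2} ◁_{|A|} 1_2`, so naturality of `γ→` in
its first argument moves it past `γ→_{2◁₁2, 2}`, where it becomes `1_2 ◁₁ γ→_{2,2}`, leaving
`γ→_{2◁₂2, 2}`; (hex 1) splits this into `(γ→_{2,2} ◁₂ 1_2) ∘ (1_2 ◁₂ γ→_{2,2})`.
-/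

namespace G

instance decidableWF : DecidablePred G.WF
  | .id _ => isTrue trivial
  | .gam _ _ => isTrue trivial
  | .gaminv _ _ => isTrue trivial
  | .comp g f =>
    have := decidableWF g
    have := decidableWF f
    inferInstanceAs (Decidable (g.WF ∧ f.WF ∧ f.tgt = g.src))
  | .ins f n g =>
    have := decidableWF f
    have := decidableWF g
    inferInstanceAs
      (Decidable (f.WF ∧ g.WF ∧ 1 ≤ n ∧ n ≤ f.src.leaves ∧ n ≤ f.tgt.leaves))

end G

instance : Trans GEq GEq GEq := ⟨GEq.trans⟩

theorem pentagon_core :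
    GEq (G.comp (G.ins (G.gam L1.two L1.two) 1 (G.id L1.two))
                (G.ins (G.gam L1.two L1.two) 3 (G.id L1.two)))
        (G.comp (G.ins (G.id L1.two) 1 (G.gam L1.two L1.two))
          (G.comp (G.ins (G.gam L1.two L1.two) 2 (G.id L1.two))
                  (G.ins (G.id L1.two) 2 (G.gam L1.two L1.two)))) :=
  calc
    GEq _ (G.comp (G.gam (L1.two.ins 1 L1.two) L1.two)
          (G.ins (G.gam L1.two L1.two) 3 (G.id L1.two))) :=
      GEq.compCongr (GEq.hex1a L1.two L1.two L1.two 1 le_rfl (by decide)).symm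
        (GEq.refl _ (by decide)) (by decide) (by decide)
    GEq _ (G.comp (G.ins (G.id L1.two) 1 (G.gam L1.two L1.two))
          (G.gam (L1.two.ins 2 L1.two) L1.two)) :=
      GEq.gnat (G.gam L1.two L1.two) (G.id L1.two) trivial trivial
    GEq _ _ :=
      GEq.compCongr (GEq.refl _ (by decide)) (GEq.hex1 L1.two L1.two L1.two)
        (by decide) (by decide)
end
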